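/- arXiv:2407.12160 — 7 statements merged into one kernel-verified Lean document; each statement's English description precedes it below -/
import Mathlib

section
/- Let X be a topological space and I an admissible ideal on ω. Then 𝓛_X(∅×I) = { ⋃_{n∈ω} A_n : (A_n) is a sequence of sets with each A_n ∈ 𝓛_X(I) }, where ∅×I is the Fubini product on ω×ω whose first factor is the trivial ideal {∅}, and 𝓛_X(∅×I) is computed using sequences indexed by ω×ω. -/
open Set Topology MeasureTheory

/-- An ideal on `Z`: a family of subsets of `Z` closed under subsets and finite unions. -/
def IsIdeal {Z : Type*} (I : Set (Set Z)) : Prop :=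
  (∀ A B : Set Z, A ⊆ B → B ∈ I → A ∈ I) ∧ ∀ A B : Set Z, A ∈ I → B ∈ I → A ∪ B ∈ I

/-- An ideal is admissible if `Z ∉ I` and `I` contains all finite sets. -/
def IsAdmissible {Z : Type*} (I : Set (Set Z)) : Prop :=
  (Set.univ : Set Z) ∉ I ∧ ∀ A : Set Z, A.Finite → A ∈ I

/-- The subsequence of `x` indexed by the (infinite) set `A` converges to `η`:
all but finitely many of the indices in `A` give values inside any neighbourhood of `η`. -/
def ConvAlong {Z X : Type*} [TopologicalSpace X] (x : Z → X) (A : Set Z) (η : X) : Prop :=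
  ∀ U ∈ nhds η, {n ∈ A | x n ∉ U}.Finite

/-- The set `Λ_x(I)` of `I`-limit points of the sequence `x`. -/
def LambdaSet {Z X : Type*} [TopologicalSpace X] (x : Z → X) (I : Set (Set Z)) : Set X :=
  {η | ∃ A : Set Z, A ∉ I ∧ A.Infinite ∧ ConvAlong x A η}

/-- The family `𝓛_X(I)` of all sets of `I`-limit points of sequences in `X`, plus `∅`. -/
def LimitFamily (Z : Type*) (X : Type*) [TopologicalSpace X] (I : Set (Set Z)) : Set (Set X) :=
  {S | ∃ x : Z → X, S = LambdaSet x I} ∪ {∅}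

/-- The Fubini product of two ideals. -/
def FubiniProd {Z W : Type*} (I : Set (Set Z)) (J : Set (Set W)) : Set (Set (Z × W)) :=
  {S | {n : Z | {k : W | (n, k) ∈ S} ∉ J} ∈ I}

/-- The ideal `Fin` of finite subsets. -/
def FinIdeal (Z : Type*) : Set (Set Z) := {A : Set Z | A.Finite}

/-- Identification of a family of subsets of `Z` with a subset of the Cantor space
`Z → Bool` via characteristic functions. -/
def chiSet {Z : Type*} (I : Set (Set Z)) : Set (Z → Bool) :=
  {f | {n : Z | f n = true} ∈ I}

/-- Finite Borel pointclasses: `SigmaClass X n` is `Σ⁰_n` for `n ≥ 1`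
(`Σ⁰₁` = open sets, `Σ⁰_{n+1}` = countable unions of complements of `Σ⁰_n` sets). -/
def SigmaClass (X : Type*) [TopologicalSpace X] : ℕ → Set (Set X)
  | 0 => ∅
  | 1 => {s | IsOpen s}
  | (n + 2) => {s | ∃ f : ℕ → Set X, (∀ k, (f k)ᶜ ∈ SigmaClass X (n + 1)) ∧ s = ⋃ k, f k}

/-- `PiClass X n` is `Π⁰_n`: complements of `Σ⁰_n` sets. -/
def PiClass (X : Type*) [TopologicalSpace X] (n : ℕ) : Set (Set X) :=
  {s | sᶜ ∈ SigmaClass X n}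

/-- Baire property: differs from an open set by a meager set. -/
def HasBP {α : Type*} [TopologicalSpace α] (s : Set α) : Prop :=
  ∃ u : Set α, IsOpen u ∧ IsMeagre (symmDiff s u)

/-- Hereditary Baire property of an ideal on `ω`. -/
def HereditaryBP (I : Set (Set ℕ)) : Prop :=
  ∀ A : Set ℕ, A ∉ I → HasBP (chiSet {S : Set ℕ | ∃ T ∈ I, S = T ∩ A})

/-- Simply analytic subset of a topological space: the projection of a Borel subset of
`X × Y` for some uncountable Polish space `Y`. -/
def SAnalytic {X : Type*} [TopologicalSpace X] (A : Set X) : Prop :=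
  ∃ (Y : Type) (tY : TopologicalSpace Y), @PolishSpace Y tY ∧ ¬Countable Y ∧
    ∃ B : Set (X × Y),
      MeasurableSet[@borel (X × Y) (@instTopologicalSpaceProd X Y _ tY)] B ∧
      A = Prod.fst '' B

/-- `P⁺`-ideal. -/
def PPlusIdeal (I : Set (Set ℕ)) : Prop :=
  ∀ A : ℕ → Set ℕ, Antitone A → (∀ n, A n ∉ I) →
    ∃ B : Set ℕ, B ∉ I ∧ ∀ n, (B \ A n).Finite

/-- `P`-ideal. -/
def PIdeal (I : Set (Set ℕ)) : Prop :=
  ∀ A : ℕ → Set ℕ, (∀ n, A n ∈ I) → ∃ B ∈ I, ∀ n, (A n \ B).Finite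

/-- `L_{x↾A}`: the set of limit points of the subsequence of `x` indexed by `A`. -/
def LimSet {X : Type*} [TopologicalSpace X] (x : ℕ → X) (A : Set ℕ) : Set X :=
  {η | ∃ B ⊆ A, B.Infinite ∧ ConvAlong x B η}

/-- The ideal `I_W` attached to a sequence `x` and a set `W`. -/
def IdealW {X : Type*} [TopologicalSpace X] (x : ℕ → X) (W : Set X) : Set (Set ℕ) :=
  {A : Set ℕ | LimSet x A ∩ W = ∅}

/-- Rudin–Blass ordering on ideals. -/
def RudinBlassLE {Z W : Type*} (I : Set (Set Z)) (J : Set (Set W)) : Prop :=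
  ∃ φ : W → Z, (∀ z : Z, (φ ⁻¹' {z}).Finite) ∧ ∀ S : Set Z, S ∈ I ↔ φ ⁻¹' S ∈ J

/-- `Π⁰₃`-hardness of a subset of the Cantor space. -/
def Pi03Hard (B : Set (ℕ → Bool)) : Prop :=
  ∀ A ∈ PiClass (ℕ → Bool) 3, ∃ Φ : (ℕ → Bool) → (ℕ → Bool), Continuous Φ ∧ Φ ⁻¹' B = A


lemma key_lambda {X : Type*} [TopologicalSpace X] (I : Set (Set ℕ)) (hadm : IsAdmissible I)
    (x : ℕ × ℕ → X) :
    LambdaSet x (FubiniProd ({∅} : Set (Set ℕ)) I) = ⋃ n, LambdaSet (fun k => x (n, k)) I := by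
  ext η
  constructor
  · rintro ⟨B, hBI, hBinf, hconv⟩
    have hne : {n : ℕ | {k : ℕ | (n, k) ∈ B} ∉ I} ≠ ∅ := by
      intro h; exact hBI (by simpa [FubiniProd] using h)
    obtain ⟨n, hn⟩ := Set.nonempty_iff_ne_empty.2 hne
    refine Set.mem_iUnion.2 ⟨n, {k | (n, k) ∈ B}, hn, ?_, ?_⟩
    · intro hfin
      exact hn (hadm.2 _ hfin)
    · intro U hU
      have h1 := hconv U hU
      have hsub : {k ∈ {k | (n, k) ∈ B} | x (n, k) ∉ U}
          ⊆ (fun k => (n, k)) ⁻¹' {p ∈ B | x p ∉ U} := fun k hk => hk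
      exact ((h1.preimage (fun a _ b _ h => by simpa [Prod.ext_iff] using h))).subset hsub
  · intro hη
    obtain ⟨n, A, hAI, hAinf, hconv⟩ := Set.mem_iUnion.1 hη
    refine ⟨(fun k => (n, k)) '' A, ?_, ?_, ?_⟩
    · intro hmem
      have hZ : {m : ℕ | {k : ℕ | (m, k) ∈ (fun k => (n, k)) '' A} ∉ I} = ∅ := by
        simpa [FubiniProd] using hmem
      have hsecA : {k : ℕ | (n, k) ∈ (fun k => (n, k)) '' A} = A := by
        ext k
        simp [Prod.ext_iff]
      have hnmem : n ∈ {m : ℕ | {k : ℕ | (m, k) ∈ (fun k => (n, k)) '' A} ∉ I} := by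
        simpa [hsecA] using hAI
      rw [hZ] at hnmem; exact hnmem
    · exact hAinf.image (fun a _ b _ h => by simpa [Prod.ext_iff] using h)
    · intro U hU
      have h1 := hconv U hU
      have hsub : {p ∈ (fun k => (n, k)) '' A | x p ∉ U}
          ⊆ (fun k => (n, k)) '' {k ∈ A | x (n, k) ∉ U} := by
        rintro ⟨m, k⟩ ⟨⟨a, ha, hak⟩, hx⟩
        obtain ⟨rfl, rfl⟩ : n = m ∧ a = k := by simpa [Prod.ext_iff] using hak
        exact ⟨a, ⟨ha, hx⟩, rfl⟩
      exact (h1.image _).subset hsub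

/-- `𝓛_X(∅×I)` is the family of countable unions of members of `𝓛_X(I)`. -/
theorem stmt1 {X : Type*} [TopologicalSpace X] (I : Set (Set ℕ))
    (hI : IsIdeal I) (hadm : IsAdmissible I) :
    LimitFamily (ℕ × ℕ) X (FubiniProd ({∅} : Set (Set ℕ)) I) =
      {S : Set X | ∃ A : ℕ → Set X, (∀ n, A n ∈ LimitFamily ℕ X I) ∧ S = ⋃ n, A n} := by
  ext S
  constructor
  · rintro (⟨x, rfl⟩ | h)
    · exact ⟨fun n => LambdaSet (fun k => x (n, k)) I, fun n => Or.inl ⟨_, rfl⟩,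
        by rw [key_lambda I hadm]⟩
    · have hS : S = ∅ := h
      exact ⟨fun _ => ∅, fun n => Or.inr rfl, by simp [hS]⟩
  · rintro ⟨A, hA, rfl⟩
    by_cases hall : ∀ n, A n = ∅
    · exact Or.inr (by simp [hall])
    · push_neg at hall
      obtain ⟨n0, hn0⟩ := hall
      have h0 : ∃ z : ℕ → X, A n0 = LambdaSet z I := by
        rcases hA n0 with h' | h'
        · exact h'
        · exact absurd h' (Set.nonempty_iff_ne_empty.1 hn0)
      obtain ⟨y0, hy0⟩ := h0
      classical
      set y : ℕ → ℕ → X :=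
        fun n => if h : ∃ z : ℕ → X, A n = LambdaSet z I then h.choose else y0 with hy
      have hyspec : ∀ n, A n = LambdaSet (y n) I ∨ (A n = ∅ ∧ y n = y0) := by
        intro n
        by_cases h : ∃ z : ℕ → X, A n = LambdaSet z I
        · left
          simpa [hy, h] using h.choose_spec
        · right
          rcases hA n with h' | h'
          · exact absurd h' h
          · exact ⟨h', by simp [hy, h]⟩
      refine Or.inl ⟨fun p => y p.1 p.2, ?_⟩
      rw [key_lambda I hadm]
      apply Set.Subset.antisymm
      · refine Set.iUnion_subset fun n => ?_
        rcases hyspec n with h | ⟨h, _⟩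
        · rw [h]
          exact Set.subset_iUnion (fun n => LambdaSet (fun k => y n k) I) n
        · rw [h]; exact Set.empty_subset _
      · refine Set.iUnion_subset fun n => ?_
        rcases hyspec n with h | ⟨he, hyn⟩
        · rw [show LambdaSet (fun k => y n k) I = A n from h.symm]
          exact Set.subset_iUnion A n
        · rw [show LambdaSet (fun k => y n k) I = A n0 by rw [hyn]; exact hy0.symm]
          exact Set.subset_iUnion A n0
end

section
/- Let X be a first countable topological space and I an admissible ideal on ω. Then 𝓛_X(Fin×I) = { limsup_n A_n : (A_n) is a sequence of sets with each A_n ∈ 𝓛_X(I) }, where limsup_n A_n := ⋂_{n∈ω} ⋃_{k≥n} A_k, Fin×I is the Fubini product on ω×ω, and 𝓛_X(Fin×I) is computed using sequences indexed by ω×ω. -/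
open Set Topology MeasureTheory

-- limsup characterization
lemma limsup_char {X : Type*} (A : ℕ → Set X) :
    (⋂ n, ⋃ k, ⋃ (_ : n ≤ k), A k) = {η | {k | η ∈ A k}.Infinite} := by
  ext η
  simp only [Set.mem_iInter, Set.mem_iUnion, Set.mem_setOf_eq]
  constructor
  · intro h
    apply Set.infinite_of_not_bddAbove
    rintro ⟨b, hb⟩
    obtain ⟨k, hk, hAk⟩ := h (b + 1)
    exact absurd (hb hAk) (by omega)
  · intro h n
    obtain ⟨b, hb, hlt⟩ := h.exists_gt n
    exact ⟨b, le_of_lt hlt, hb⟩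

-- key lemma
lemma key {X : Type*} [TopologicalSpace X] [FirstCountableTopology X]
    (I : Set (Set ℕ)) (hI : IsIdeal I) (hadm : IsAdmissible I) (y : ℕ × ℕ → X) :
    LambdaSet y (FubiniProd (FinIdeal ℕ) I) =
      {η | {k | η ∈ LambdaSet (fun m => y (k, m)) I}.Infinite} := by
  ext η
  constructor
  · rintro ⟨S, hSnot, hSinf, hconv⟩
    have hK : {n | {k | (n, k) ∈ S} ∉ I}.Infinite := hSnot
    refine hK.mono ?_
    intro k hk
    refine ⟨{m | (k, m) ∈ S}, hk, ?_, ?_⟩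
    · intro hfin
      exact hk (hadm.2 _ hfin)
    · intro U hU
      have : {m ∈ {m | (k, m) ∈ S} | y (k, m) ∉ U} =
          (fun m => (k, m)) ⁻¹' {p ∈ S | y p ∉ U} := by
        ext m; simp [Set.mem_setOf_eq]
      rw [this]
      exact (hconv U hU).preimage (fun a _ b _ h => (Prod.mk.injEq _ _ _ _ ▸ h).2)
  · intro hinf
    set K := {k | η ∈ LambdaSet (fun m => y (k, m)) I} with hKdef
    -- choose witnesses
    have hch : ∀ k ∈ K, ∃ A : Set ℕ, A ∉ I ∧ A.Infinite ∧ ConvAlong (fun m => y (k, m)) A η :=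
      fun k hk => hk
    choose! A hA1 hA2 hA3 using hch
    obtain ⟨u, hu⟩ := (nhds η).exists_antitone_basis
    set e : ℕ → ℕ := Nat.nth (· ∈ K) with he
    have heK : ∀ j, e j ∈ K := Nat.nth_mem_of_infinite hinf
    have hei : Function.Injective e := Nat.nth_injective hinf
    set B : ℕ → Set ℕ := fun j => {m ∈ A (e j) | y (e j, m) ∈ u j} with hB
    have hBnot : ∀ j, B j ∉ I := by
      intro j hBj
      apply hA1 (e j) (heK j)
      have hfin : {m ∈ A (e j) | y (e j, m) ∉ u j} ∈ I :=
        hadm.2 _ (hA3 (e j) (heK j) (u j) (hu.1.mem_of_mem trivial))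
      refine hI.1 _ _ ?_ (hI.2 _ _ hBj hfin)
      intro m hm
      by_cases hmu : y (e j, m) ∈ u j
      · exact Or.inl ⟨hm, hmu⟩
      · exact Or.inr ⟨hm, hmu⟩
    set S : Set (ℕ × ℕ) := ⋃ j, ({e j} ×ˢ B j) with hS
    have hcol : ∀ j, {m | (e j, m) ∈ S} = B j := by
      intro j
      ext m
      simp only [hS, Set.mem_iUnion, Set.mem_prod, Set.mem_singleton_iff, Set.mem_setOf_eq]
      constructor
      · rintro ⟨j', hj', hm⟩
        rwa [hei hj'.symm] at hm
      · exact fun hm => ⟨j, rfl, hm⟩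
    refine ⟨S, ?_, ?_, ?_⟩
    · intro hmem
      have : Set.range e ⊆ {n | {k | (n, k) ∈ S} ∉ I} := by
        rintro _ ⟨j, rfl⟩
        simp only [Set.mem_setOf_eq, hcol j]
        exact hBnot j
      exact (Set.infinite_range_of_injective hei).mono this hmem
    · have : ({e 0} ×ˢ B 0 : Set (ℕ × ℕ)).Infinite := by
        have hB0 : (B 0).Infinite := fun hfin => hBnot 0 (hadm.2 _ hfin)
        have : ({e 0} ×ˢ B 0 : Set (ℕ × ℕ)) = (fun m => (e 0, m)) '' B 0 := by
          ext p; rcases p with ⟨a, b⟩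
          simp [eq_comm, and_comm]
        rw [this]
        exact hB0.image (fun a _ b _ h => (Prod.mk.injEq _ _ _ _ ▸ h).2)
      exact this.mono (Set.subset_iUnion (fun j => ({e j} ×ˢ B j : Set (ℕ × ℕ))) 0)
    · intro U hU
      obtain ⟨m, -, hm⟩ := hu.1.mem_iff.1 hU
      have hsub : {p ∈ S | y p ∉ U} ⊆
          ⋃ j ∈ Finset.range m, ((fun n => (e j, n)) '' {n ∈ A (e j) | y (e j, n) ∉ U}) := by
        rintro ⟨a, b⟩ ⟨hab, hyU⟩
        simp only [hS, Set.mem_iUnion, Set.mem_prod, Set.mem_singleton_iff] at hab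
        obtain ⟨j, rfl, hb⟩ := hab
        have hjm : j < m := by
          by_contra hjm
          push_neg at hjm
          exact hyU (hm (hu.2 hjm hb.2))
        simp only [Set.mem_iUnion, Finset.mem_range]
        exact ⟨j, hjm, b, ⟨hb.1, hyU⟩, rfl⟩
      refine Set.Finite.subset ?_ hsub
      refine Set.Finite.biUnion (Finset.range m).finite_toSet ?_
      intro j _
      exact (hA3 (e j) (heK j) U hU).image _

/-- `𝓛_X(Fin×I)` is the family of limsups of sequences of members of `𝓛_X(I)`. -/
theorem stmt2 {X : Type*} [TopologicalSpace X] [FirstCountableTopology X]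
    (I : Set (Set ℕ)) (hI : IsIdeal I) (hadm : IsAdmissible I) :
    LimitFamily (ℕ × ℕ) X (FubiniProd (FinIdeal ℕ) I) =
      {S : Set X | ∃ A : ℕ → Set X, (∀ n, A n ∈ LimitFamily ℕ X I) ∧
        S = ⋂ n, ⋃ k, ⋃ (_ : n ≤ k), A k} := by
  ext S
  constructor
  · rintro (⟨y, rfl⟩ | hS)
    · exact ⟨fun k => LambdaSet (fun m => y (k, m)) I,
        fun k => Or.inl ⟨fun m => y (k, m), rfl⟩,
        by rw [limsup_char, key I hI hadm]⟩
    · refine ⟨fun _ => ∅, fun n => Or.inr rfl, ?_⟩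
      rw [Set.mem_singleton_iff.1 hS]
      simp only [Set.iUnion_empty, Set.iInter_const]
  · rintro ⟨A, hA, rfl⟩
    rw [limsup_char]
    by_cases hne : {η | {k | η ∈ A k}.Infinite} = ∅
    · exact Or.inr hne
    · left
      obtain ⟨η0, hη0⟩ := Set.nonempty_iff_ne_empty.2 hne
      have hKinf : {k | (A k).Nonempty}.Infinite :=
        hη0.mono fun k hk => ⟨η0, hk⟩
      have hch : ∀ k, (A k).Nonempty → ∃ x : ℕ → X, A k = LambdaSet x I := by
        intro k hk
        rcases hA k with ⟨x, hx⟩ | hx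
        · exact ⟨x, hx⟩
        · exact absurd (Set.mem_singleton_iff.1 hx) hk.ne_empty
      haveI : Nonempty X := ⟨η0⟩
      choose! x hx using hch
      set e : ℕ → ℕ := Nat.nth (fun k => (A k).Nonempty) with he
      have heK : ∀ j, (A (e j)).Nonempty := Nat.nth_mem_of_infinite hKinf
      refine ⟨fun p => x (e p.1) p.2, ?_⟩
      rw [key I hI hadm]
      ext η
      simp only [Set.mem_setOf_eq]
      constructor
      · intro h
        have hsub : {k | η ∈ A k} ⊆ Set.range e := by
          intro k hk
          rw [he, Nat.range_nth_of_infinite hKinf]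
          exact ⟨η, hk⟩
        refine (h.preimage hsub).mono ?_
        intro j hj
        have := hx (e j) (heK j)
        simp only [Set.mem_preimage, Set.mem_setOf_eq, this] at hj
        exact hj
      · intro h
        refine (h.image (Set.injOn_of_injective (Nat.nth_injective hKinf))).mono ?_
        rintro _ ⟨j, hj, rfl⟩
        simp only [Set.mem_setOf_eq] at hj ⊢
        rw [hx (e j) (heK j)]
        exact hj
end

section
/- Define recursively the ideals Fin¹ := Fin on ω and Fin^{α+1} := Fin × Fin^α, an ideal on ω^{α+1} (identifying ω^{α+1} with ω × ω^α). Let X be a Polish space. Then for each positive integer α: (i) Fin^α, viewed as a subset of the space {0,1}^{ω^α} via characteristic functions, is a Σ⁰_{2α} set, and 𝓛_X(Fin^α) equals the family of all Π⁰_{2α−1} subsets of X; (ii) the Fubini product ∅×Fin^α (whose first factor is the trivial ideal {∅}) is a Π⁰_{2α+1} set, and 𝓛_X(∅×Fin^α) equals the family of all Σ⁰_{2α} subsets of X. -/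
open Set Topology MeasureTheory

/-- `IterProd β` is `ω^(β+1)`. -/
def IterProd : ℕ → Type
  | 0 => ℕ
  | (n + 1) => ℕ × IterProd n

/-- `FinPow β` is the ideal `Fin^(β+1)` on `ω^(β+1)`. -/
def FinPow : (n : ℕ) → Set (Set (IterProd n))
  | 0 => FinIdeal ℕ
  | (n + 1) => FubiniProd (FinIdeal ℕ) (FinPow n)


/-!
Everything is computed row by row. For a double sequence `x : ℕ × Z → X` with rows
`xₙ = x (n, ·)`, `Λ_x(∅ × J) = ⋃ₙ Λ_{xₙ}(J)` and `Λ_x(Fin × J) = limsupₙ Λ_{xₙ}(J)`; likewise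
`χ(Fin × J)` is a liminf, and `χ(∅ × J)` an intersection, of continuous preimages of `χ(J)`.
This gives the upper bounds on the Borel classes by induction on `β`, starting from the fact
that `Λ_x(Fin)` is the closed set of cluster points of `x`.

For the converse, every `Π⁰_{c+3}` set is a limsup of `Π⁰_{c+1}` sets: write it as a decreasing
intersection of `Σ⁰_{c+2}` sets and split each of these into a point-finite union of `Π⁰_{c+1}`
pieces (disjointify and recurse, down to the closed bands `l ≤ 1 / d(·, Uᶜ) ≤ l + 1` of an open
set `U`). Point-finiteness is what makes a point outside the intersection lie in only finitely
many pieces. Each piece, enlarged by a fixed point of the target set so that it is nonempty, is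
then realized as `Λ_{xₙ}(J)` by a row. In the base case a dense sequence of a closed set `C`,
each term repeated infinitely often, has cluster set `C`.
-/

open Filter TopologicalSpace

section BorelClasses

variable {X Y : Type*} [TopologicalSpace X] [TopologicalSpace Y] {n : ℕ} {s t : Set X}

theorem mem_piClass : s ∈ PiClass X n ↔ sᶜ ∈ SigmaClass X n := Iff.rfl

theorem compl_mem_piClass : sᶜ ∈ PiClass X n ↔ s ∈ SigmaClass X n := by
  rw [mem_piClass, compl_compl]

theorem mem_piClass_one : s ∈ PiClass X 1 ↔ IsClosed s := isOpen_compl_iff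

theorem mem_sigmaClass_of_isClopen : ∀ n {s : Set X}, IsClopen s → s ∈ SigmaClass X (n + 1)
  | 0, _, hs => hs.isOpen
  | n + 1, s, hs =>
    ⟨fun _ => s, fun _ => mem_sigmaClass_of_isClopen n hs.compl, (iUnion_const s).symm⟩

theorem mem_piClass_of_isClopen (n : ℕ) (hs : IsClopen s) : s ∈ PiClass X (n + 1) :=
  mem_sigmaClass_of_isClopen n hs.compl

theorem iUnion_mem_sigmaClass_of_piClass {ι : Type*} [Countable ι] {f : ι → Set X}
    (hf : ∀ i, f i ∈ PiClass X (n + 1)) : ⋃ i, f i ∈ SigmaClass X (n + 2) := by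
  rcases isEmpty_or_nonempty ι with hι | hι
  · exact ⟨fun _ => ∅, fun _ => mem_piClass_of_isClopen n isClopen_empty, by simp⟩
  · obtain ⟨g, hg⟩ := exists_surjective_nat ι
    exact ⟨f ∘ g, fun k => hf (g k), (hg.iUnion_comp f).symm⟩

theorem mem_sigmaClass_succ_of_piClass (hs : s ∈ PiClass X (n + 1)) : s ∈ SigmaClass X (n + 2) :=
  (iUnion_const s : ⋃ _ : Unit, s = s) ▸ iUnion_mem_sigmaClass_of_piClass fun _ => hs

theorem mem_piClass_succ_of_sigmaClass (hs : s ∈ SigmaClass X (n + 1)) : s ∈ PiClass X (n + 2) :=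
  mem_sigmaClass_succ_of_piClass (compl_mem_piClass.2 hs)

theorem iUnion_mem_sigmaClass {ι : Type*} [Countable ι] {f : ι → Set X}
    (hf : ∀ i, f i ∈ SigmaClass X (n + 1)) : ⋃ i, f i ∈ SigmaClass X (n + 1) := by
  cases n with
  | zero => exact isOpen_iUnion hf
  | succ n =>
    choose g hg hfg using hf
    have : ⋃ i, f i = ⋃ p : ι × ℕ, g p.1 p.2 := by rw [iUnion_prod']; exact iUnion_congr hfg
    rw [this]
    exact iUnion_mem_sigmaClass_of_piClass fun p => hg p.1 p.2

theorem iInter_mem_piClass {ι : Type*} [Countable ι] {f : ι → Set X}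
    (hf : ∀ i, f i ∈ PiClass X (n + 1)) : ⋂ i, f i ∈ PiClass X (n + 1) := by
  rw [mem_piClass, compl_iInter]
  exact iUnion_mem_sigmaClass hf

theorem iInter_mem_piClass_of_sigmaClass {ι : Type*} [Countable ι] {f : ι → Set X}
    (hf : ∀ i, f i ∈ SigmaClass X (n + 1)) : ⋂ i, f i ∈ PiClass X (n + 2) :=
  iInter_mem_piClass fun i => mem_piClass_succ_of_sigmaClass (hf i)

theorem union_mem_sigmaClass (hs : s ∈ SigmaClass X (n + 1)) (ht : t ∈ SigmaClass X (n + 1)) :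
    s ∪ t ∈ SigmaClass X (n + 1) := by
  rw [union_eq_iUnion]
  exact iUnion_mem_sigmaClass (Bool.forall_bool.2 ⟨ht, hs⟩)

theorem inter_mem_piClass (hs : s ∈ PiClass X (n + 1)) (ht : t ∈ PiClass X (n + 1)) :
    s ∩ t ∈ PiClass X (n + 1) := by
  rw [mem_piClass, compl_inter]
  exact union_mem_sigmaClass hs ht

theorem inter_mem_sigmaClass : ∀ {n : ℕ} {s t : Set X}, s ∈ SigmaClass X (n + 1) →
    t ∈ SigmaClass X (n + 1) → s ∩ t ∈ SigmaClass X (n + 1)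
  | 0, _, _, hs, ht => hs.inter ht
  | _ + 1, _, _, ⟨f, hf, hs⟩, ⟨g, hg, ht⟩ => by
    rw [hs, ht, iUnion_inter_iUnion]
    exact iUnion_mem_sigmaClass fun i => iUnion_mem_sigmaClass fun j =>
      mem_sigmaClass_succ_of_piClass (inter_mem_piClass (hf i) (hg j))

theorem union_mem_piClass (hs : s ∈ PiClass X (n + 1)) (ht : t ∈ PiClass X (n + 1)) :
    s ∪ t ∈ PiClass X (n + 1) := by
  rw [mem_piClass, compl_union]
  exact inter_mem_sigmaClass hs ht

theorem biInter_mem_sigmaClass {ι : Type*} {I : Set ι} (hI : I.Finite) {f : ι → Set X}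
    (hf : ∀ i ∈ I, f i ∈ SigmaClass X (n + 1)) : ⋂ i ∈ I, f i ∈ SigmaClass X (n + 1) := by
  have : ⋂ i ∈ I, f i = hI.toFinset.inf f := by simp [Finset.inf_set_eq_iInter]
  rw [this]
  exact Finset.inf_mem _ (mem_sigmaClass_of_isClopen n isClopen_univ)
    (fun _ hs _ ht => inter_mem_sigmaClass hs ht) _ _ fun i hi => hf i (hI.mem_toFinset.1 hi)

theorem preimage_mem_sigmaClass {φ : Y → X} (hφ : Continuous φ) :
    ∀ {n : ℕ} {s : Set X}, s ∈ SigmaClass X (n + 1) → φ ⁻¹' s ∈ SigmaClass Y (n + 1)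
  | 0, _, hs => hs.preimage hφ
  | _ + 1, _, ⟨f, hf, hs⟩ =>
    ⟨fun k => φ ⁻¹' f k, fun k => preimage_mem_sigmaClass hφ (hf k), by rw [hs, preimage_iUnion]⟩

end BorelClasses

section Metrizable

variable {X : Type*} [TopologicalSpace X] [PseudoMetrizableSpace X]

theorem mem_sigmaClass_of_isOpen : ∀ n {s : Set X}, IsOpen s → s ∈ SigmaClass X (n + 1)
  | 0, _, hs => hs
  | n + 1, _, hs => by
    let := pseudoMetrizableSpacePseudoMetric X
    obtain ⟨F, hF, -, hFs, -⟩ := hs.exists_iUnion_isClosed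
    exact ⟨F, fun k => mem_sigmaClass_of_isOpen n (hF k).isOpen_compl, hFs.symm⟩

theorem mem_piClass_of_isClosed (n : ℕ) {s : Set X} (hs : IsClosed s) : s ∈ PiClass X (n + 1) :=
  mem_sigmaClass_of_isOpen n hs.isOpen_compl

theorem mem_sigmaClass_succ : ∀ {n : ℕ} {s : Set X}, s ∈ SigmaClass X (n + 1) →
    s ∈ SigmaClass X (n + 2)
  | 0, _, hs => mem_sigmaClass_of_isOpen 1 hs
  | _ + 1, _, ⟨f, hf, hs⟩ => ⟨f, fun k => mem_sigmaClass_succ (hf k), hs⟩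

theorem mem_piClass_succ {n : ℕ} {s : Set X} (hs : s ∈ PiClass X (n + 1)) :
    s ∈ PiClass X (n + 2) :=
  mem_sigmaClass_succ hs

end Metrizable

section PointFinite

variable {X : Type*}

def IsPointFiniteUnion (𝒞 : Set (Set X)) (T : Set X) : Prop :=
  ∃ P : ℕ → Set X, (∀ k, P k ∈ 𝒞) ∧ ⋃ k, P k = T ∧ ∀ x, {k | x ∈ P k}.Finite

variable {𝒞 𝒟 : Set (Set X)} {T : Set X}

theorem IsPointFiniteUnion.mono (h : 𝒞 ⊆ 𝒟) (hT : IsPointFiniteUnion 𝒞 T) :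
    IsPointFiniteUnion 𝒟 T :=
  let ⟨P, hP, hPT, hfin⟩ := hT
  ⟨P, fun k => h (hP k), hPT, hfin⟩

theorem IsPointFiniteUnion.of_nat_prod (P : ℕ × ℕ → Set X) (hP : ∀ q, P q ∈ 𝒞)
    (hPT : ⋃ q, P q = T) (hfin : ∀ x, {q | x ∈ P q}.Finite) : IsPointFiniteUnion 𝒞 T :=
  ⟨P ∘ Nat.unpair, fun k => hP _, by rw [← hPT]; exact Nat.surjective_unpair.iUnion_comp P,
    fun x => (hfin x).preimage Nat.pairEquiv.symm.injective.injOn⟩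

theorem IsPointFiniteUnion.iUnion {D : ℕ → Set X} (hD : Pairwise (Function.onFun Disjoint D))
    (h : ∀ n, IsPointFiniteUnion 𝒞 (D n)) : IsPointFiniteUnion 𝒞 (⋃ n, D n) := by
  choose P hP hPD hfin using h
  refine .of_nat_prod (fun q => P q.1 q.2) (fun q => hP _ _) ?_ fun x => ?_
  · rw [iUnion_prod']; exact iUnion_congr hPD
  · have hsub : ∀ n k, x ∈ P n k → x ∈ D n := fun n k hx => hPD n ▸ mem_iUnion_of_mem k hx
    by_cases hx : ∃ n, x ∈ D n
    · obtain ⟨n, hn⟩ := hx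
      refine ((finite_singleton n).prod (hfin n x)).subset fun q hq => ?_
      have hq1 : q.1 = n := hD.eq (not_disjoint_iff.2 ⟨x, hsub _ _ hq, hn⟩)
      exact ⟨hq1, hq1 ▸ hq⟩
    · simp only [not_exists] at hx
      exact (finite_empty).subset fun q hq => hx q.1 (hsub _ _ hq)

theorem IsPointFiniteUnion.inter_left {A : Set X} (h𝒞 : ∀ P ∈ 𝒞, A ∩ P ∈ 𝒞)
    (hT : IsPointFiniteUnion 𝒞 T) : IsPointFiniteUnion 𝒞 (A ∩ T) :=
  let ⟨P, hP, hPT, hfin⟩ := hT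
  ⟨fun k => A ∩ P k, fun k => h𝒞 _ (hP k), by rw [← inter_iUnion, hPT],
    fun x => (hfin x).subset fun _ hk => hk.2⟩

end PointFinite

section PointFiniteClosed

open scoped ENNReal NNReal

variable {X : Type*} [TopologicalSpace X]

theorem isPointFiniteUnion_isClosed_setOf_ne_top {h : X → ℝ≥0∞} (hh : Continuous h) :
    IsPointFiniteUnion {s | IsClosed s} {x | h x ≠ ∞} := by
  refine ⟨fun l => h ⁻¹' Icc (l : ℝ≥0∞) (l + 1), fun l => isClosed_Icc.preimage hh, ?_, fun x => ?_⟩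
  · refine Subset.antisymm (iUnion_subset fun l x hx => ?_) fun x hx => ?_
    · exact ne_top_of_le_ne_top (by simp) hx.2
    · obtain ⟨r, hr⟩ : ∃ r : ℝ≥0, (r : ℝ≥0∞) = h x := ⟨_, ENNReal.coe_toNNReal hx⟩
      refine mem_iUnion.2 ⟨⌊r⌋₊, ?_⟩
      rw [mem_preimage, ← hr]
      exact ⟨by exact_mod_cast Nat.floor_le r.2, by exact_mod_cast (Nat.lt_floor_add_one r).le⟩
  · by_cases hx : h x = ∞
    · refine (finite_empty).subset fun l hl => ?_
      exact absurd hx (ne_top_of_le_ne_top (by simp) hl.2)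
    · obtain ⟨r, hr⟩ : ∃ r : ℝ≥0, (r : ℝ≥0∞) = h x := ⟨_, ENNReal.coe_toNNReal hx⟩
      refine (finite_Iic ⌊r⌋₊).subset fun l hl => Nat.le_floor ?_
      have hl : (l : ℝ≥0∞) ≤ r := hr ▸ hl.1
      exact_mod_cast hl

theorem IsOpen.isPointFiniteUnion_isClosed [PseudoMetrizableSpace X] {U : Set X} (hU : IsOpen U) :
    IsPointFiniteUnion {s | IsClosed s} U := by
  let := pseudoMetrizableSpacePseudoMetric X
  convert isPointFiniteUnion_isClosed_setOf_ne_top (Metric.continuous_infEDist (s := Uᶜ)).inv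
  ext x
  change x ∈ U ↔ (Metric.infEDist x Uᶜ)⁻¹ ≠ ∞
  rw [ENNReal.inv_ne_top, ne_eq, ← Metric.mem_closure_iff_infEDist_zero,
    hU.isClosed_compl.closure_eq, notMem_compl_iff]

end PointFiniteClosed

section PointFiniteSigma

variable {X : Type*} [TopologicalSpace X]

theorem isPointFiniteUnion_of_mem_sigmaClass_succ_succ {n : ℕ}
    (hlow : ∀ s ∈ SigmaClass X (n + 1), IsPointFiniteUnion (PiClass X (n + 1)) s) {T : Set X}
    (hT : T ∈ SigmaClass X (n + 2)) : IsPointFiniteUnion (PiClass X (n + 1)) T := by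
  obtain ⟨S, hS, rfl⟩ := hT
  rw [← iUnion_disjointed]
  refine .iUnion (disjoint_disjointed S) fun k => ?_
  rw [disjointed_eq_inter_compl]
  exact .inter_left (fun P hP => inter_mem_piClass (hS k) hP)
    (hlow _ (biInter_mem_sigmaClass (finite_Iio k) fun j _ => hS j))

theorem isPointFiniteUnion_of_mem_sigmaClass [PseudoMetrizableSpace X] :
    ∀ n {T : Set X}, T ∈ SigmaClass X (n + 1) → IsPointFiniteUnion (PiClass X (n + 1)) T
  | 0, _, hT => hT.isPointFiniteUnion_isClosed.mono fun _ => mem_piClass_one.2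
  | n + 1, _, hT =>
    (isPointFiniteUnion_of_mem_sigmaClass_succ_succ
      (fun _ => isPointFiniteUnion_of_mem_sigmaClass n) hT).mono fun _ => mem_piClass_succ

theorem exists_limsup_eq_of_mem_piClass [PseudoMetrizableSpace X] {c : ℕ} {D : Set X}
    (hD : D ∈ PiClass X (c + 3)) :
    ∃ F : ℕ → Set X, (∀ n, F n ∈ PiClass X (c + 1)) ∧ limsup F atTop = D := by
  obtain ⟨g, hg, hDg⟩ := hD
  set T : ℕ → Set X := fun m => ⋂ j ∈ Iic m, (g j)ᶜ
  have hT : ∀ m, T m ∈ SigmaClass X (c + 2) :=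
    fun m => biInter_mem_sigmaClass (finite_Iic m) fun j _ => hg j
  have hDT : ∀ η, η ∈ D ↔ ∀ m, η ∈ T m := fun η => by
    rw [← compl_compl D, hDg]
    simp only [T, mem_compl_iff, mem_iUnion, mem_iInter, mem_Iic, not_exists]
    exact ⟨fun h m j _ => h j, fun h j => h j j le_rfl⟩
  choose P hP hPT hfin using fun m => isPointFiniteUnion_of_mem_sigmaClass_succ_succ
    (fun _ => isPointFiniteUnion_of_mem_sigmaClass c) (hT m)
  refine ⟨fun i => P (Nat.unpair i).1 (Nat.unpair i).2, fun i => hP _ _, ?_⟩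
  ext η
  have hunpair : ∀ S : Set (ℕ × ℕ), (Nat.unpair ⁻¹' S).Finite ↔ S.Finite := fun S =>
    ⟨fun h => h.of_preimage Nat.surjective_unpair,
      fun h => h.preimage Nat.pairEquiv.symm.injective.injOn⟩
  rw [mem_limsup_iff_frequently_mem, Nat.frequently_atTop_iff_infinite, hDT]
  change ¬(Nat.unpair ⁻¹' {q | η ∈ P q.1 q.2}).Finite ↔ _
  rw [hunpair]
  constructor
  · intro hinf
    by_contra hη
    obtain ⟨m₀, hm₀⟩ := not_forall.1 hη
    refine hinf (((finite_Iio m₀).biUnion fun m _ =>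
      (finite_singleton m).prod (hfin m η)).subset ?_)
    rintro ⟨m, k⟩ hq
    have hηm : η ∈ T m := hPT m ▸ mem_iUnion_of_mem k hq
    have hm : m < m₀ := not_le.1 fun h => hm₀ (biInter_subset_biInter_left (Iic_subset_Iic.2 h) hηm)
    exact mem_biUnion hm ⟨rfl, hq⟩
  · intro hη hfin'
    refine infinite_univ (α := ℕ) ((hfin'.image Prod.fst).subset fun m _ => ?_)
    obtain ⟨k, hk⟩ := mem_iUnion.1 ((hPT m).symm ▸ hη m)
    exact ⟨(m, k), hk, rfl⟩

end PointFiniteSigma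

section Limsup

variable {X : Type*} [TopologicalSpace X] {c : ℕ} {F : ℕ → Set X}

theorem limsup_mem_piClass (hF : ∀ n, F n ∈ SigmaClass X (c + 1)) :
    limsup F atTop ∈ PiClass X (c + 2) := by
  rw [limsup_eq_iInf_iSup_of_nat']
  exact iInter_mem_piClass_of_sigmaClass fun m => iUnion_mem_sigmaClass fun i => hF (i + m)

theorem liminf_mem_sigmaClass (hF : ∀ n, F n ∈ PiClass X (c + 1)) :
    liminf F atTop ∈ SigmaClass X (c + 2) := by
  rw [liminf_eq_iSup_iInf_of_nat']
  exact iUnion_mem_sigmaClass_of_piClass fun m => iInter_mem_piClass fun i => hF (i + m)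

end Limsup

section Ideals

variable {Z W : Type*} {I : Set (Set Z)} {J : Set (Set W)}

theorem isIdeal_finIdeal : IsIdeal (FinIdeal Z) :=
  ⟨fun _ _ hAB hB => Set.Finite.subset hB hAB, fun _ _ => Set.Finite.union⟩

theorem IsIdeal.fubiniProd (hI : IsIdeal I) (hJ : IsIdeal J) : IsIdeal (FubiniProd I J) := by
  refine ⟨fun A B hAB hB => hI.1 {n | {k | (n, k) ∈ A} ∉ J} {n | {k | (n, k) ∈ B} ∉ J}
      (fun n hn hB' => hn (hJ.1 _ _ (fun k hk => hAB hk) hB')) hB,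
    fun A B hA hB => hI.1 _ _ (fun n hn => ?_) (hI.2 _ _ hA hB)⟩
  by_contra h
  simp only [mem_union, mem_ofPred_eq, not_or, not_not] at h
  exact hn (hJ.2 _ _ h.1 h.2)

theorem finite_mem_fubiniProd (hI : ∅ ∈ I) (hJ : ∀ s : Set W, s.Finite → s ∈ J) {A : Set (Z × W)}
    (hA : A.Finite) : A ∈ FubiniProd I J := by
  have : {n | {k | (n, k) ∈ A} ∉ J} = ∅ := eq_empty_of_forall_notMem fun n hn =>
    hn (hJ _ (hA.preimage (Prod.mk_right_injective n).injOn))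
  exact (this ▸ hI :)

theorem isIdeal_finPow : ∀ β, IsIdeal (FinPow β)
  | 0 => isIdeal_finIdeal
  | β + 1 => isIdeal_finIdeal.fubiniProd (isIdeal_finPow β)

theorem finite_mem_finPow : ∀ β {A : Set (IterProd β)}, A.Finite → A ∈ FinPow β
  | 0, _, hA => hA
  | β + 1, _, hA => finite_mem_fubiniProd finite_empty (fun _ => finite_mem_finPow β) hA

end Ideals

section LimitPoints

variable {Z X : Type*} [TopologicalSpace X] {x : Z → X} {A B : Set Z} {η : X}

theorem ConvAlong.mono (h : ConvAlong x A η) (hBA : B ⊆ A) : ConvAlong x B η :=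
  fun U hU => (h U hU).subset fun _ hn => ⟨hBA hn.1, hn.2⟩

theorem ConvAlong.preimage {Y : Type*} {f : Y → Z} (hf : Function.Injective f)
    (h : ConvAlong x A η) : ConvAlong (x ∘ f) (f ⁻¹' A) η :=
  fun U hU => (h U hU).preimage hf.injOn

theorem ConvAlong.image {Y : Type*} {f : Y → Z} {A : Set Y} (h : ConvAlong (x ∘ f) A η) :
    ConvAlong x (f '' A) η :=
  fun U hU => ((h U hU).image f).subset <| by rintro _ ⟨⟨y, hy, rfl⟩, hU⟩; exact ⟨y, ⟨hy, hU⟩, rfl⟩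

theorem ConvAlong.inter_preimage_notMem {J : Set (Set Z)} (hJ : IsIdeal J)
    (hJfin : ∀ s : Set Z, s.Finite → s ∈ J) (hA : A ∉ J) (h : ConvAlong x A η) {U : Set X}
    (hU : U ∈ 𝓝 η) : A ∩ x ⁻¹' U ∉ J := fun hAU =>
  hA (hJ.1 _ _ (fun n hn => (em (x n ∈ U)).imp (⟨hn, ·⟩) (⟨hn, ·⟩))
    (hJ.2 _ _ hAU (hJfin _ (h U hU))))

theorem mem_lambdaSet_iff {I : Set (Set Z)} (hI : ∀ s : Set Z, s.Finite → s ∈ I) :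
    η ∈ LambdaSet x I ↔ ∃ A ∉ I, ConvAlong x A η :=
  ⟨fun ⟨A, hA, _, h⟩ => ⟨A, hA, h⟩, fun ⟨A, hA, h⟩ => ⟨A, hA, fun hfin => hA (hI _ hfin), h⟩⟩

theorem limitFamily_eq {I : Set (Set Z)} {𝒞 : Set (Set X)} (h𝒞 : ∅ ∈ 𝒞)
    (hΛ : ∀ x : Z → X, LambdaSet x I ∈ 𝒞)
    (hreal : ∀ S ∈ 𝒞, S.Nonempty → ∃ x : Z → X, LambdaSet x I = S) : LimitFamily Z X I = 𝒞 := by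
  refine Subset.antisymm ?_ fun S hS => ?_
  · rintro S (⟨x, rfl⟩ | rfl)
    exacts [hΛ x, h𝒞]
  · rcases S.eq_empty_or_nonempty with rfl | hne
    · exact Or.inr rfl
    · obtain ⟨x, rfl⟩ := hreal S hS hne
      exact Or.inl ⟨x, rfl⟩

end LimitPoints

section FinIdeal

variable {X : Type*} [TopologicalSpace X]

theorem lambdaSet_finIdeal [FirstCountableTopology X] (x : ℕ → X) :
    LambdaSet x (FinIdeal ℕ) = {η | MapClusterPt η atTop x} := by
  ext η
  rw [mem_lambdaSet_iff (I := FinIdeal ℕ) fun _ => id]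
  refine ⟨fun ⟨A, hA, h⟩ => mapClusterPt_iff_frequently.2 fun U hU => ?_, fun hη => ?_⟩
  · rw [Nat.frequently_atTop_iff_infinite]
    exact (Set.Infinite.sdiff hA (h U hU)).mono fun n hn => not_not.1 fun hxn => hn.2 ⟨hn.1, hxn⟩
  · obtain ⟨ψ, hψ, hlim⟩ := MapClusterPt.tendsto_subseq hη
    refine ⟨range ψ, infinite_range_of_injective hψ.injective, ?_⟩
    rw [← image_univ]
    refine ConvAlong.image fun U hU => ?_
    rw [← Nat.cofinite_eq_atTop] at hlim
    exact (mem_cofinite.1 (hlim hU)).subset fun n hn => hn.2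

theorem isClosed_lambdaSet_finIdeal [FirstCountableTopology X] (x : ℕ → X) :
    IsClosed (LambdaSet x (FinIdeal ℕ)) := by
  rw [lambdaSet_finIdeal]
  exact isClosed_setOfPred_clusterPt

theorem exists_lambdaSet_finIdeal_eq [SecondCountableTopology X] {C : Set X} (hC : IsClosed C)
    (hne : C.Nonempty) : ∃ x : ℕ → X, LambdaSet x (FinIdeal ℕ) = C := by
  have : Nonempty C := hne.to_subtype
  obtain ⟨u, hu⟩ := exists_dense_seq C
  refine ⟨fun n => u (Nat.unpair n).1, ?_⟩
  rw [lambdaSet_finIdeal]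
  ext η
  refine ⟨fun hη => ?_, fun hη => mapClusterPt_iff_frequently.2 fun U hU => ?_⟩
  · by_contra hηC
    obtain ⟨n, hn⟩ := (hη.frequently (hC.isOpen_compl.mem_nhds hηC)).exists
    exact hn (u _).2
  · obtain ⟨k, hk⟩ := hu.mem_nhds
      (continuous_subtype_val.continuousAt.preimage_mem_nhds (x := ⟨η, hη⟩) hU)
    rw [Nat.frequently_atTop_iff_infinite]
    exact infinite_of_injective_forall_mem (f := Nat.pair k)
      (fun _ _ h => (Nat.pair_eq_pair.1 h).2) fun m => by simpa [Nat.unpair_pair] using hk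

theorem limitFamily_finIdeal [SecondCountableTopology X] :
    LimitFamily ℕ X (FinIdeal ℕ) = PiClass X 1 :=
  limitFamily_eq (mem_piClass_one.2 isClosed_empty)
    (fun x => mem_piClass_one.2 (isClosed_lambdaSet_finIdeal x))
    fun _ hS => exists_lambdaSet_finIdeal_eq (mem_piClass_one.1 hS)

end FinIdeal

section Fubini

variable {Z X : Type*} [TopologicalSpace X] {J : Set (Set Z)}

theorem lambdaSet_fubiniProd_empty (hJ : ∀ s : Set Z, s.Finite → s ∈ J) (x : ℕ × Z → X) :
    LambdaSet x (FubiniProd ({∅} : Set (Set ℕ)) J) = ⋃ n, LambdaSet (fun k => x (n, k)) J := by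
  have hI : ∀ s : Set (ℕ × Z), s.Finite → s ∈ FubiniProd ({∅} : Set (Set ℕ)) J :=
    fun _ => finite_mem_fubiniProd (mem_singleton ∅) hJ
  ext η
  simp only [mem_iUnion, mem_lambdaSet_iff hI, mem_lambdaSet_iff hJ]
  constructor
  · rintro ⟨A, hA, h⟩
    obtain ⟨n, hn⟩ := nonempty_iff_ne_empty.2 hA
    exact ⟨n, _, hn, h.preimage (Prod.mk_right_injective n)⟩
  · rintro ⟨n, A, hA, h⟩
    refine ⟨Prod.mk n '' A, fun hA' => ?_, h.image⟩
    have hn : Prod.mk n ⁻¹' (Prod.mk n '' A) ∉ J := by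
      rwa [preimage_image_eq _ (Prod.mk_right_injective n)]
    exact (mem_singleton_iff.1 hA').subset hn

theorem convAlong_of_rows {η : X} {U : ℕ → Set X} (hU : (𝓝 η).HasAntitoneBasis U)
    {x : ℕ × Z → X} {B : ℕ → Set Z} (hB : ∀ n, ConvAlong (fun k => x (n, k)) (B n) η)
    (hBU : ∀ n, ∀ k ∈ B n, x (n, k) ∈ U n) : ConvAlong x {p | p.2 ∈ B p.1} η := by
  intro V hV
  obtain ⟨m, hm⟩ := hU.mem_iff.1 hV
  refine ((finite_Iio m).biUnion fun n _ => (hB n V hV).image (Prod.mk n)).subset ?_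
  rintro ⟨n, k⟩ ⟨hk, hkV⟩
  have hn : n < m := not_le.1 fun h => hkV (hm (hU.antitone h (hBU n k hk)))
  exact mem_biUnion hn ⟨k, ⟨hk, hkV⟩, rfl⟩

theorem lambdaSet_fubiniProd_finIdeal [FirstCountableTopology X] (hJ : IsIdeal J)
    (hJfin : ∀ s : Set Z, s.Finite → s ∈ J) (x : ℕ × Z → X) :
    LambdaSet x (FubiniProd (FinIdeal ℕ) J) =
      limsup (fun n => LambdaSet (fun k => x (n, k)) J) atTop := by
  have hI : ∀ s : Set (ℕ × Z), s.Finite → s ∈ FubiniProd (FinIdeal ℕ) J :=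
    fun _ => finite_mem_fubiniProd finite_empty hJfin
  ext η
  rw [mem_limsup_iff_frequently_mem, Nat.frequently_atTop_iff_infinite, mem_lambdaSet_iff hI]
  constructor
  · rintro ⟨A, hA, h⟩
    exact Set.Infinite.mono (fun n hn => (mem_lambdaSet_iff hJfin).2
      ⟨_, hn, h.preimage (Prod.mk_right_injective n)⟩) hA
  · intro hη
    obtain ⟨U, hU⟩ := (𝓝 η).exists_antitone_basis
    have hrow : ∀ n, ∃ B : Set Z, (η ∈ LambdaSet (fun k => x (n, k)) J → B ∉ J) ∧
        ConvAlong (fun k => x (n, k)) B η ∧ ∀ k ∈ B, x (n, k) ∈ U n := by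
      intro n
      by_cases hn : η ∈ LambdaSet (fun k => x (n, k)) J
      · obtain ⟨A, hA, h⟩ := (mem_lambdaSet_iff hJfin).1 hn
        exact ⟨A ∩ (fun k => x (n, k)) ⁻¹' U n,
          fun _ => h.inter_preimage_notMem hJ hJfin hA (hU.mem n), h.mono inter_subset_left,
          fun _ hk => hk.2⟩
      · exact ⟨∅, fun h => absurd h hn, fun _ _ => by simp, fun _ hk => hk.elim⟩
    choose B hBJ hB hBU using hrow
    exact ⟨{p | p.2 ∈ B p.1}, fun hfin => hη (hfin.subset fun n hn => hBJ n hn),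
      convAlong_of_rows hU hB hBU⟩

variable [MetrizableSpace X] {c : ℕ}

theorem exists_lambdaSet_rows_eq_union_singleton (hJX : LimitFamily Z X J = PiClass X (c + 1))
    {F : ℕ → Set X} (hF : ∀ n, F n ∈ PiClass X (c + 1)) (p : X) :
    ∃ x : ℕ × Z → X, ∀ n, LambdaSet (fun k => x (n, k)) J = F n ∪ {p} := by
  have hrow : ∀ n, ∃ y : Z → X, LambdaSet y J = F n ∪ {p} := fun n => by
    have hmem : F n ∪ {p} ∈ LimitFamily Z X J :=
      hJX ▸ union_mem_piClass (hF n) (mem_piClass_of_isClosed c isClosed_singleton)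
    exact (hmem.resolve_right (union_nonempty.2 (.inr (singleton_nonempty p))).ne_empty).imp
      fun _ => Eq.symm
  choose y hy using hrow
  exact ⟨fun q => y q.1 q.2, hy⟩

theorem limitFamily_fubiniProd_finIdeal (hJ : IsIdeal J) (hJfin : ∀ s : Set Z, s.Finite → s ∈ J)
    (hJX : LimitFamily Z X J = PiClass X (c + 1)) :
    LimitFamily (ℕ × Z) X (FubiniProd (FinIdeal ℕ) J) = PiClass X (c + 3) := by
  refine limitFamily_eq (mem_piClass_of_isClosed _ isClosed_empty) (fun x => ?_)
    fun S hS ⟨p, hp⟩ => ?_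
  · rw [lambdaSet_fubiniProd_finIdeal hJ hJfin]
    refine limsup_mem_piClass fun n => mem_sigmaClass_succ_of_piClass ?_
    rw [← hJX]
    exact Or.inl ⟨_, rfl⟩
  · obtain ⟨F, hF, rfl⟩ := exists_limsup_eq_of_mem_piClass hS
    obtain ⟨x, hx⟩ := exists_lambdaSet_rows_eq_union_singleton hJX hF p
    refine ⟨x, ?_⟩
    rw [lambdaSet_fubiniProd_finIdeal hJ hJfin, funext hx]
    ext η
    simp only [mem_limsup_iff_frequently_mem, mem_union, mem_singleton_iff, frequently_or_distrib,
      frequently_const]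
    exact or_iff_left_of_imp fun h => h ▸ mem_limsup_iff_frequently_mem.1 hp

theorem limitFamily_fubiniProd_empty (hJfin : ∀ s : Set Z, s.Finite → s ∈ J)
    (hJX : LimitFamily Z X J = PiClass X (c + 1)) :
    LimitFamily (ℕ × Z) X (FubiniProd ({∅} : Set (Set ℕ)) J) = SigmaClass X (c + 2) := by
  refine limitFamily_eq (mem_sigmaClass_of_isClopen _ isClopen_empty) (fun x => ?_)
    fun S hS ⟨p, hp⟩ => ?_
  · rw [lambdaSet_fubiniProd_empty hJfin]
    refine iUnion_mem_sigmaClass_of_piClass fun n => ?_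
    rw [← hJX]
    exact Or.inl ⟨_, rfl⟩
  · obtain ⟨F, hF, rfl⟩ := hS
    obtain ⟨x, hx⟩ := exists_lambdaSet_rows_eq_union_singleton hJX hF p
    refine ⟨x, ?_⟩
    rw [lambdaSet_fubiniProd_empty hJfin, iUnion_congr hx, ← iUnion_union,
      union_eq_left.2 (singleton_subset_iff.2 hp)]

end Fubini

section CharacteristicSets

variable {W : Type*} {J : Set (Set W)} {c : ℕ}

theorem chiSet_finIdeal :
    chiSet (FinIdeal ℕ) = liminf (fun n => {f : ℕ → Bool | f n = false}) atTop := by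
  ext f
  rw [mem_liminf_iff_eventually_mem, ← Nat.cofinite_eq_atTop, eventually_cofinite]
  simp [chiSet, FinIdeal]

theorem chiSet_fubiniProd_finIdeal :
    chiSet (FubiniProd (FinIdeal ℕ) J) =
      liminf (fun n => (fun f : ℕ × W → Bool => f ∘ Prod.mk n) ⁻¹' chiSet J) atTop := by
  ext f
  rw [mem_liminf_iff_eventually_mem, ← Nat.cofinite_eq_atTop, eventually_cofinite]
  rfl

theorem chiSet_fubiniProd_empty :
    chiSet (FubiniProd ({∅} : Set (Set ℕ)) J) =
      ⋂ n, (fun f : ℕ × W → Bool => f ∘ Prod.mk n) ⁻¹' chiSet J := by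
  ext f
  rw [mem_iInter]
  exact eq_empty_iff_forall_notMem.trans (forall_congr' fun _ => not_not)

theorem chiSet_finIdeal_mem : chiSet (FinIdeal ℕ) ∈ SigmaClass (ℕ → Bool) 2 := by
  rw [chiSet_finIdeal]
  exact liminf_mem_sigmaClass (c := 0) fun n =>
    mem_piClass_one.2 (isClosed_eq (continuous_apply n) continuous_const)

theorem chiSet_fubiniProd_finIdeal_mem (hJ : chiSet J ∈ SigmaClass (W → Bool) (c + 2)) :
    chiSet (FubiniProd (FinIdeal ℕ) J) ∈ SigmaClass (ℕ × W → Bool) (c + 4) := by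
  rw [chiSet_fubiniProd_finIdeal]
  exact liminf_mem_sigmaClass fun n =>
    mem_piClass_succ_of_sigmaClass (preimage_mem_sigmaClass (Pi.continuous_precomp _) hJ)

theorem chiSet_fubiniProd_empty_mem (hJ : chiSet J ∈ SigmaClass (W → Bool) (c + 2)) :
    chiSet (FubiniProd ({∅} : Set (Set ℕ)) J) ∈ PiClass (ℕ × W → Bool) (c + 3) := by
  rw [chiSet_fubiniProd_empty]
  exact iInter_mem_piClass_of_sigmaClass fun n =>
    preimage_mem_sigmaClass (Pi.continuous_precomp _) hJ

end CharacteristicSets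

theorem chiSet_finPow_mem : ∀ β, chiSet (FinPow β) ∈ SigmaClass (IterProd β → Bool) (2 * β + 2)
  | 0 => chiSet_finIdeal_mem
  | β + 1 => chiSet_fubiniProd_finIdeal_mem (chiSet_finPow_mem β)

theorem limitFamily_finPow {X : Type*} [TopologicalSpace X] [MetrizableSpace X]
    [SecondCountableTopology X] :
    ∀ β, LimitFamily (IterProd β) X (FinPow β) = PiClass X (2 * β + 1)
  | 0 => limitFamily_finIdeal
  | β + 1 => limitFamily_fubiniProd_finIdeal (isIdeal_finPow β) (fun _ => finite_mem_finPow β)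
    (limitFamily_finPow β)

/-- for every positive integer `α` (written `α = β + 1`):
`Fin^α` is `Σ⁰_{2α}` and `𝓛_X(Fin^α) = Π⁰_{2α-1}(X)`; the ideal `∅×Fin^α` is `Π⁰_{2α+1}`
and `𝓛_X(∅×Fin^α) = Σ⁰_{2α}(X)`. -/
theorem stmt3 {X : Type*} [TopologicalSpace X] [PolishSpace X] (β : ℕ) :
    chiSet (FinPow β) ∈ SigmaClass (IterProd β → Bool) (2 * β + 2) ∧
    LimitFamily (IterProd β) X (FinPow β) = PiClass X (2 * β + 1) ∧
    chiSet (FubiniProd ({∅} : Set (Set ℕ)) (FinPow β)) ∈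
      PiClass ((ℕ × IterProd β) → Bool) (2 * β + 3) ∧
    LimitFamily (ℕ × IterProd β) X (FubiniProd ({∅} : Set (Set ℕ)) (FinPow β)) =
      SigmaClass X (2 * β + 2) :=
  ⟨chiSet_finPow_mem β, limitFamily_finPow β, chiSet_fubiniProd_empty_mem (chiSet_finPow_mem β),
    limitFamily_fubiniProd_empty (fun _ => finite_mem_finPow β) (limitFamily_finPow β)⟩
end

section
/- Let I be an ideal on ω such that ∅×Fin ≤_RB I. Then I, viewed as a subset of the Cantor space {0,1}^ω via characteristic functions, is Π⁰₃-hard; that is, for every Π⁰₃ subset A of the Cantor space there exists a continuous map Φ : {0,1}^ω → {0,1}^ω with Φ⁻¹[I] = A. -/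
open Set Topology MeasureTheory

noncomputable def seqA (D : ℕ → Set (ℕ → Bool)) (x : ℕ → Bool) (k : ℕ) : ℕ :=
  sInf ({m | m ≤ k ∧ ∃ y ∈ D m, ∀ i < k, y i = x i} ∪ {k + 1})

lemma seqA_spec (D : ℕ → Set (ℕ → Bool)) (x : ℕ → Bool) (k : ℕ) :
    seqA D x k ∈ ({m | m ≤ k ∧ ∃ y ∈ D m, ∀ i < k, y i = x i} ∪ {k + 1}) :=
  Nat.sInf_mem ⟨k + 1, Or.inr rfl⟩

lemma seqA_le (D : ℕ → Set (ℕ → Bool)) (x : ℕ → Bool) (k : ℕ) :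
    seqA D x k ≤ k + 1 :=
  Nat.sInf_le (Or.inr rfl)

lemma seqA_mono (D : ℕ → Set (ℕ → Bool)) (x : ℕ → Bool) : Monotone (seqA D x) := by
  apply monotone_nat_of_le_succ
  intro k
  rcases seqA_spec D x (k + 1) with h | h
  · obtain ⟨hle, y, hy, hag⟩ := h
    by_cases hk : seqA D x (k + 1) ≤ k
    · exact Nat.sInf_le (Or.inl ⟨hk, y, hy, fun i hi => hag i (hi.trans (Nat.lt_succ_self k))⟩)
    · have := seqA_le D x k
      omega
  · have := seqA_le D x k
    simp only [Set.mem_singleton_iff] at h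
    omega

lemma seqA_bound (D : ℕ → Set (ℕ → Bool)) (x : ℕ → Bool) (m₀ : ℕ) (hx : x ∈ D m₀)
    (k : ℕ) (hk : m₀ ≤ k) : seqA D x k ≤ m₀ :=
  Nat.sInf_le (Or.inl ⟨hk, x, hx, fun _ _ => rfl⟩)

lemma seqA_congr (D : ℕ → Set (ℕ → Bool)) (x x' : ℕ → Bool) (k : ℕ)
    (h : ∀ i < k, x i = x' i) : seqA D x k = seqA D x' k := by
  unfold seqA
  congr 1
  ext m
  simp only [Set.mem_union, Set.mem_setOf_eq]
  constructor
  · rintro (⟨hm, y, hy, hag⟩ | hm)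
    · exact Or.inl ⟨hm, y, hy, fun i hi => (hag i hi).trans (h i hi)⟩
    · exact Or.inr hm
  · rintro (⟨hm, y, hy, hag⟩ | hm)
    · exact Or.inl ⟨hm, y, hy, fun i hi => (hag i hi).trans (h i hi).symm⟩
    · exact Or.inr hm

lemma seqA_escape (D : ℕ → Set (ℕ → Bool)) (x : ℕ → Bool)
    (hmono : Monotone D) (hcl : ∀ m, IsClosed (D m)) (hx : ∀ m, x ∉ D m) (M : ℕ) :
    ∃ K, ∀ k, K ≤ k → M < seqA D x k := by
  have hop : IsOpen (D M)ᶜ := (hcl M).isOpen_compl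
  rw [isOpen_pi_iff] at hop
  obtain ⟨If, u, hu, hsub⟩ := hop x (hx M)
  set K : ℕ := (If.sup id) + 1 ⊔ (M + 1) with hK
  refine ⟨K, fun k hk => ?_⟩
  have key : ∀ m ∈ ({m | m ≤ k ∧ ∃ y ∈ D m, ∀ i < k, y i = x i} ∪ {k + 1} : Set ℕ), M < m := by
    rintro m (⟨hm, y, hy, hag⟩ | hm)
    · by_contra hle
      push_neg at hle
      have hyM : y ∈ D M := hmono hle hy
      have : y ∈ (If : Set ℕ).pi u := by
        intro i hi
        have hi' : i < k := by
          have : i ≤ If.sup id := Finset.le_sup (f := id) hi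
          omega
        rw [hag i hi']
        exact (hu i hi).2
      exact hsub this hyM
    · simp only [Set.mem_singleton_iff] at hm
      omega
  exact key _ (seqA_spec D x k)

lemma seqA_finite_iff (D : ℕ → Set (ℕ → Bool)) (x : ℕ → Bool)
    (hmono : Monotone D) (hcl : ∀ m, IsClosed (D m)) :
    {k | seqA D x k < seqA D x (k + 1)}.Finite ↔ ∃ m, x ∈ D m := by
  constructor
  · intro hfin
    by_contra hx
    push_neg at hx
    obtain ⟨N, hN⟩ := hfin.bddAbove
    have hconst : ∀ k, seqA D x (N + 1 + k) = seqA D x (N + 1) := by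
      intro k
      induction k with
      | zero => rfl
      | succ k ih =>
        have hnot : N + 1 + k ∉ {k | seqA D x k < seqA D x (k + 1)} := by
          intro hmem
          exact absurd (hN hmem) (by omega)
        simp only [Set.mem_setOf_eq, not_lt] at hnot
        have := seqA_mono D x (Nat.le_succ (N + 1 + k))
        have heq : seqA D x (N + 1 + k + 1) = seqA D x (N + 1 + k) := le_antisymm hnot this
        rw [show N + 1 + (k + 1) = N + 1 + k + 1 by omega, heq, ih]
    obtain ⟨K, hK⟩ := seqA_escape D x hmono hcl hx (seqA D x (N + 1))
    have h1 := hK (N + 1 + K) (by omega)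
    rw [hconst K] at h1
    omega
  · rintro ⟨m₀, hm₀⟩
    have hb : ∀ k, seqA D x k ≤ m₀ := by
      intro k
      rcases le_or_gt m₀ k with h | h
      · exact seqA_bound D x m₀ hm₀ k h
      · have := seqA_le D x k
        omega
    apply Set.Finite.of_finite_image (f := seqA D x)
    · exact (Set.finite_Iic m₀).subset (by rintro _ ⟨k, _, rfl⟩; exact hb k)
    · intro k hk k' hk' heq
      by_contra hne
      rcases Nat.lt_or_ge k k' with h | h
      · have h1 : seqA D x (k + 1) ≤ seqA D x k' := seqA_mono D x h
        have := hk
        simp only [Set.mem_setOf_eq] at this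
        omega
      · have h' : k' < k := by omega
        have h1 : seqA D x (k' + 1) ≤ seqA D x k := seqA_mono D x h'
        have := hk'
        simp only [Set.mem_setOf_eq] at this
        omega

lemma cont_of_prefix {g : (ℕ → Bool) → Bool} (K : ℕ)
    (h : ∀ x y : ℕ → Bool, (∀ i < K, x i = y i) → g x = g y) : Continuous g := by
  have heq : g = (fun t : Fin K → Bool => g (fun i => if hi : i < K then t ⟨i, hi⟩ else false)) ∘
      (fun x (i : Fin K) => x i) := by
    funext x
    show g x = g fun i => if hi : i < K then x i else false
    exact h x _ fun i hi => by simp [hi]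
  rw [heq]
  exact Continuous.comp continuous_of_discreteTopology (continuous_pi fun i => continuous_apply _)


/-- if `∅×Fin ≤_RB I` then `I` is `Π⁰₃`-hard in the Cantor space. -/
theorem stmt8 (I : Set (Set ℕ)) (hI : IsIdeal I)
    (hRB : RudinBlassLE (FubiniProd ({∅} : Set (Set ℕ)) (FinIdeal ℕ)) I) :
    Pi03Hard (chiSet I) := by
  intro A hA
  -- unpack the Π⁰₃ structure of A
  obtain ⟨f, hf, hAc⟩ := hA
  choose g hg hgU using fun n => (hf n)
  -- g n k are closed
  have hgcl : ∀ n k, IsClosed (g n k) := by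
    intro n k
    have := hg n k
    simp only [SigmaClass, Set.mem_setOf_eq] at this
    exact ⟨this⟩
  -- increasing closed sets D n m
  set D : ℕ → ℕ → Set (ℕ → Bool) := fun n m => ⋃ i ∈ Finset.range (m + 1), g n i with hD
  have hDcl : ∀ n m, IsClosed (D n m) := by
    intro n m
    exact Set.Finite.isClosed_biUnion (Finset.finite_toSet _) (fun i _ => hgcl n i)
  have hDmono : ∀ n, Monotone (D n) := by
    intro n m m' hmm' x hx
    simp only [hD, Set.mem_iUnion, Finset.mem_range] at hx ⊢
    obtain ⟨i, hi, h⟩ := hx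
    exact ⟨i, by omega, h⟩
  have hDmem : ∀ n x, (∃ m, x ∈ D n m) ↔ x ∈ (f n)ᶜ := by
    intro n x
    rw [hgU n]
    constructor
    · rintro ⟨m, hm⟩
      simp only [hD, Set.mem_iUnion, Finset.mem_range] at hm ⊢
      obtain ⟨i, _, hi⟩ := hm
      exact ⟨i, hi⟩
    · rintro hx
      simp only [Set.mem_iUnion] at hx
      obtain ⟨k, hk⟩ := hx
      refine ⟨k, ?_⟩
      simp only [hD, Set.mem_iUnion, Finset.mem_range]
      exact ⟨k, by omega, hk⟩
  have hAeq : ∀ x, x ∈ A ↔ ∀ n, x ∈ (f n)ᶜ := by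
    intro x
    have : A = (⋃ k, f k)ᶜ := by rw [← hAc, compl_compl]
    rw [this]
    simp [Set.mem_iInter]
  -- the Rudin–Blass map
  obtain ⟨φ, hφfin, hφ⟩ := hRB
  refine ⟨fun x j =>
    decide (seqA (D (φ j).1) x (φ j).2 < seqA (D (φ j).1) x ((φ j).2 + 1)), ?_, ?_⟩
  · apply continuous_pi
    intro j
    apply cont_of_prefix ((φ j).2 + 1)
    intro x y hxy
    have h1 : seqA (D (φ j).1) x (φ j).2 = seqA (D (φ j).1) y (φ j).2 :=
      seqA_congr _ x y _ (fun i hi => hxy i (by omega))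
    have h2 : seqA (D (φ j).1) x ((φ j).2 + 1) = seqA (D (φ j).1) y ((φ j).2 + 1) :=
      seqA_congr _ x y _ (fun i hi => hxy i hi)
    rw [h1, h2]
  · ext x
    simp only [Set.mem_preimage, chiSet, Set.mem_setOf_eq, decide_eq_true_eq]
    have hset : {n : ℕ | seqA (D (φ n).1) x (φ n).2 < seqA (D (φ n).1) x ((φ n).2 + 1)}
        = φ ⁻¹' {p : ℕ × ℕ | seqA (D p.1) x p.2 < seqA (D p.1) x (p.2 + 1)} := rfl
    rw [hset, ← hφ]
    simp only [FubiniProd, FinIdeal, Set.mem_singleton_iff, Set.mem_setOf_eq]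
    rw [hAeq x]
    constructor
    · intro h n
      rw [← hDmem n x, ← seqA_finite_iff (D n) x (hDmono n) (hDcl n)]
      by_contra hnf
      have : n ∈ ({} : Set ℕ) := by
        rw [← h]
        exact hnf
      exact this
    · intro h
      ext n
      simp only [Set.mem_setOf_eq, Set.mem_empty_iff_false, iff_false, not_not]
      rw [seqA_finite_iff (D n) x (hDmono n) (hDcl n), hDmem n x]
      exact h n
end

section
/- Let X be a topological space, Y an uncountable Polish space, and f : X → Y a Borel measurable function (with respect to the Borel σ-algebras). If A ⊆ Y is an analytic set, then f⁻¹[A] is a simply analytic subset of X. -/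
open Set Topology MeasureTheory

/-- Borel preimages of analytic subsets of an uncountable Polish space are
simply analytic. -/
theorem stmt10 {X Y : Type*} [TopologicalSpace X] [TopologicalSpace Y] [PolishSpace Y]
    (hY : ¬Countable Y) (f : X → Y)
    (hf : @Measurable X Y (borel X) (borel Y) f)
    (A : Set Y) (hA : MeasureTheory.AnalyticSet A) :
    SAnalytic (f ⁻¹' A) := by
  have hunc : ¬ Countable (ℕ → ℕ) := by
    intro h
    have h1 : Cardinal.mk (ℕ → ℕ) ≤ Cardinal.aleph0 := Cardinal.mk_le_aleph0
    have h2 : Cardinal.continuum ≤ Cardinal.mk (ℕ → ℕ) := by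
      rw [Cardinal.mk_arrow]; simp [Cardinal.mk_nat]
    exact absurd (h2.trans h1) (by simp [Cardinal.aleph0_lt_continuum.not_ge])
  refine ⟨ℕ → ℕ, inferInstance, inferInstance, hunc, ?_⟩
  rw [MeasureTheory.AnalyticSet] at hA
  letI : MeasurableSpace X := borel X
  haveI : BorelSpace X := ⟨rfl⟩
  letI : MeasurableSpace Y := borel Y
  haveI : BorelSpace Y := ⟨rfl⟩
  rcases hA with rfl | ⟨g, hg, hrange⟩
  · exact ⟨∅, @MeasurableSet.empty _ (borel _), by simp⟩
  · refine ⟨{p : X × (ℕ → ℕ) | f p.1 = g p.2}, ?_, ?_⟩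
    · letI : MeasurableSpace (X × (ℕ → ℕ)) := borel _
      haveI : BorelSpace (X × (ℕ → ℕ)) := ⟨rfl⟩
      have h1 : Measurable (fun p : X × (ℕ → ℕ) => f p.1) :=
        hf.comp (continuous_fst.measurable)
      have h2 : Measurable (fun p : X × (ℕ → ℕ) => g p.2) :=
        hg.measurable.comp (continuous_snd.measurable)
      have hd : MeasurableSet (Set.diagonal Y) := isClosed_diagonal.measurableSet
      exact (h1.prodMk h2) hd
    · ext x
      simp only [mem_preimage, mem_image, mem_setOf_eq]
      constructor
      · intro hx
        rw [← hrange] at hx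
        rcases hx with ⟨p, hp⟩
        exact ⟨(x, p), hp.symm, rfl⟩
      · rintro ⟨⟨x', p⟩, hp, rfl⟩
        rw [← hrange]
        exact ⟨p, hp.symm⟩
end

section
/- Let (A_n) be a sequence of simply analytic subsets of a topological space X. Then both ⋃_{n∈ω} A_n and ⋂_{n∈ω} A_n are simply analytic subsets of X. -/
open Set Topology MeasureTheory

/-- countable unions and intersections of simply analytic sets are
simply analytic. -/
theorem stmt12 {X : Type*} [TopologicalSpace X] (A : ℕ → Set X) (hA : ∀ n, SAnalytic (A n)) :
    SAnalytic (⋃ n, A n) ∧ SAnalytic (⋂ n, A n) := by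

  choose Y tY hP hC B hB hproj using hA
  letI := tY
  haveI : ∀ n, PolishSpace (Y n) := hP
  haveI hne : ∀ n, Nonempty (Y n) := fun n =>
    not_isEmpty_iff.mp fun h => hC n inferInstance
  have hsurj : Function.Surjective (fun y : ∀ n, Y n => y 0) := fun z =>
    ⟨Function.update (fun n => Classical.arbitrary (Y n)) 0 z, by simp⟩
  have hCprod : ¬Countable (∀ n, Y n) := fun h => hC 0 hsurj.countable
  have hfcont : ∀ n, Continuous (fun p : X × (∀ m, Y m) => (p.1, p.2 n)) := fun n =>
    continuous_fst.prodMk ((continuous_apply n).comp continuous_snd)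
  have hmeas : ∀ n, MeasurableSet[borel (X × (∀ m, Y m))]
      ((fun p : X × (∀ m, Y m) => (p.1, p.2 n)) ⁻¹' (B n)) := fun n =>
    (hfcont n).borel_measurable (hB n)
  constructor
  · refine ⟨∀ n, Y n, inferInstance, inferInstance, hCprod,
      ⋃ n, (fun p : X × (∀ m, Y m) => (p.1, p.2 n)) ⁻¹' (B n),
      MeasurableSet.iUnion hmeas, ?_⟩
    ext x
    simp only [mem_iUnion, image_iUnion, mem_image, mem_preimage]
    constructor
    · rintro ⟨n, hx⟩
      rw [hproj n] at hx
      obtain ⟨⟨x', z⟩, hz, rfl⟩ := hx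
      exact ⟨n, ⟨(x', Function.update (fun m => Classical.arbitrary (Y m)) n z), by
        simpa using hz, rfl⟩⟩
    · rintro ⟨n, ⟨p, hp, rfl⟩⟩
      refine ⟨n, ?_⟩
      rw [hproj n]
      exact ⟨(p.1, p.2 n), hp, rfl⟩
  · refine ⟨∀ n, Y n, inferInstance, inferInstance, hCprod,
      ⋂ n, (fun p : X × (∀ m, Y m) => (p.1, p.2 n)) ⁻¹' (B n),
      MeasurableSet.iInter hmeas, ?_⟩
    ext x
    simp only [mem_iInter, mem_image, mem_preimage]
    constructor
    · intro hx
      have : ∀ n, ∃ z : Y n, (x, z) ∈ B n := by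
        intro n
        have := hx n
        rw [hproj n] at this
        obtain ⟨⟨x', z⟩, hz, rfl⟩ := this
        exact ⟨z, hz⟩
      choose y hy using this
      exact ⟨(x, y), fun n => hy n, rfl⟩
    · rintro ⟨⟨x', y⟩, hy, rfl⟩ n
      rw [hproj n]
      exact ⟨(x', y n), hy n, rfl⟩
end

section
/- Let x be a sequence taking values in a first countable Hausdorff space X and let W ⊆ X. Then Λ_x(I_W) = W ∩ L_x. In particular, if x enumerates a countable dense subset of X in such a way that every value occurs infinitely often (possible whenever X is separable), then L_x = X, so Λ_x(I_W) = W for every W ⊆ X, and hence W ∈ 𝓛_X(I_W). -/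
open Set Topology MeasureTheory

private lemma convAlong_mono {X : Type*} [TopologicalSpace X] (x : ℕ → X) {A B : Set ℕ}
    (h : B ⊆ A) {η : X} (hA : ConvAlong x A η) : ConvAlong x B η := fun U hU =>
  (hA U hU).subset fun n hn => ⟨h hn.1, hn.2⟩

private lemma convAlong_unique {X : Type*} [TopologicalSpace X] [T2Space X] (x : ℕ → X)
    {B : Set ℕ} (hB : B.Infinite) {η ζ : X}
    (h1 : ConvAlong x B η) (h2 : ConvAlong x B ζ) : η = ζ := by
  by_contra hne
  obtain ⟨U, V, hU, hV, hηU, hζV, hd⟩ := t2_separation hne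
  have : B ⊆ {n ∈ B | x n ∉ U} ∪ {n ∈ B | x n ∉ V} := by
    intro n hn
    by_cases h : x n ∈ U
    · exact Or.inr ⟨hn, fun hv => hd.le_bot ⟨h, hv⟩⟩
    · exact Or.inl ⟨hn, h⟩
  exact hB (((h1 U (hU.mem_nhds hηU)).union (h2 V (hV.mem_nhds hζV))).subset this)

/-- `Λ_x(I_W) = W ∩ L_x`; in particular, if `x` enumerates a dense subset of `X`
with every value attained infinitely often, then `L_x = X`, `Λ_x(I_W) = W` and
`W ∈ 𝓛_X(I_W)`. -/
theorem stmt13 {X : Type*} [TopologicalSpace X] [FirstCountableTopology X]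
    [T2Space X] (x : ℕ → X) (W : Set X) :
    LambdaSet x (IdealW x W) = W ∩ LimSet x Set.univ ∧
    ((DenseRange x ∧ ∀ n : ℕ, {m : ℕ | x m = x n}.Infinite) →
      LimSet x Set.univ = Set.univ ∧ LambdaSet x (IdealW x W) = W ∧
      W ∈ LimitFamily ℕ X (IdealW x W)) := by
  have main : LambdaSet x (IdealW x W) = W ∩ LimSet x Set.univ := by
    ext η
    constructor
    · rintro ⟨A, hAI, hAinf, hconv⟩
      have hne : (LimSet x A ∩ W).Nonempty := Set.nonempty_iff_ne_empty.mpr hAI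
      obtain ⟨ζ, ⟨B, hBA, hBinf, hBconv⟩, hζW⟩ := hne
      have : η = ζ := convAlong_unique x hBinf (convAlong_mono x hBA hconv) hBconv
      exact ⟨this ▸ hζW, A, Set.subset_univ A, hAinf, hconv⟩
    · rintro ⟨hηW, B, -, hBinf, hBconv⟩
      refine ⟨B, ?_, hBinf, hBconv⟩
      intro hB
      exact Set.eq_empty_iff_forall_notMem.mp hB η ⟨⟨B, subset_rfl, hBinf, hBconv⟩, hηW⟩
  refine ⟨main, fun ⟨hdense, hinf⟩ => ?_⟩
  have hL : LimSet x Set.univ = Set.univ := by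
    ext η
    simp only [Set.mem_univ, iff_true]
    obtain ⟨y, hy, hty⟩ := mem_closure_iff_seq_limit.mp (hdense η)
    choose m hm using hy
    -- build strictly increasing indices with x value = y k
    have hfib : ∀ k b : ℕ, ∃ c, c ∈ {m' : ℕ | x m' = y k} ∧ b < c := by
      intro k b
      have : {m' : ℕ | x m' = x (m k)}.Infinite := hinf (m k)
      rw [hm k] at this
      exact this.exists_gt b
    have : ∃ n : ℕ → ℕ, StrictMono n ∧ ∀ k, x (n k) = y k := by
      refine ⟨fun k => Nat.rec (hfib 0 0).choose
        (fun k ih => (hfib (k+1) ih).choose) k, ?_, ?_⟩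
      · apply strictMono_nat_of_lt_succ
        intro k
        exact (hfib (k+1) _).choose_spec.2
      · intro k
        cases k with
        | zero => exact (hfib 0 0).choose_spec.1
        | succ k => exact (hfib (k+1) _).choose_spec.1
    obtain ⟨n, hmono, hval⟩ := this
    refine ⟨Set.range n, Set.subset_univ _, Set.infinite_range_of_injective hmono.injective, ?_⟩
    intro U hU
    have : ∀ᶠ k in Filter.atTop, y k ∈ U := hty hU
    obtain ⟨K, hK⟩ := Filter.eventually_atTop.mp this
    apply Set.Finite.subset ((Set.finite_Iio K).image n)
    rintro j ⟨⟨k, rfl⟩, hnot⟩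
    refine ⟨k, ?_, rfl⟩
    by_contra hk
    exact hnot (hval k ▸ hK k (le_of_not_gt hk))
  refine ⟨hL, ?_, ?_⟩
  · rw [main, hL, Set.inter_univ]
  · exact Or.inl ⟨x, by rw [main, hL, Set.inter_univ]⟩
end
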